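/- (Knuth update with subsolver leaf weights at depth d, Equation (1) of the paper.) Let N be a finite full binary tree, let T : List (Fin 2) → ℝ assign a nonnegative weight T(v) to each leaf v ∈ Leaves(N) while every internal node has weight 1, and let n ∈ N be a node of depth d = |n|. Then, conditional on the uniformly random root-to-leaf path passing through n and terminating at leaf v at path length ℓ, the expectation of 2^{ℓ−d} T(v) + 2^{ℓ−d} − 1 equals the total weighted size of the subtree rooted at n. Formally: ∑_{v ∈ Leaves(N), n prefix of v} 2^{d−|v|} · ( 2^{|v|−d} T(v) + 2^{|v|−d} − 1 ) = I_n + ∑_{v ∈ Leaves(N), n prefix of v} T(v), where I_n is the number of internal nodes m ∈ N having n as a prefix, and all sums are over the real numbers. -/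
import Mathlib


/-- A finite full `k`-ary tree: a finite set of words over `Fin k` containing the
empty word, closed under prefixes, and such that every node either has all `k`
one-letter extensions in the set (internal node) or none of them (leaf). -/
def IsFullTree (k : ℕ) (N : Finset (List (Fin k))) : Prop :=
  ([] : List (Fin k)) ∈ N ∧
  (∀ n ∈ N, ∀ m : List (Fin k), m <+: n → m ∈ N) ∧
  (∀ n ∈ N, (∀ i : Fin k, n ++ [i] ∈ N) ∨ (∀ i : Fin k, n ++ [i] ∉ N))

/-- The leaves of `N`: nodes none of whose one-letter extensions lie in `N`. -/
def leaves (k : ℕ) (N : Finset (List (Fin k))) : Finset (List (Fin k)) :=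
  N.filter (fun n => ∀ i : Fin k, n ++ [i] ∉ N)

/-- The internal nodes of `N`: nodes all of whose one-letter extensions lie in `N`. -/
def internals (k : ℕ) (N : Finset (List (Fin k))) : Finset (List (Fin k)) :=
  N.filter (fun n => ∀ i : Fin k, n ++ [i] ∈ N)

lemma child_prefix {k : ℕ} {n v : List (Fin k)} (h : n <+: v) (hne : v ≠ n) :
    ∃ i : Fin k, n ++ [i] <+: v := by
  obtain ⟨t, rfl⟩ := h
  cases t with
  | nil => simp at hne
  | cons i t => exact ⟨i, t, by simp⟩

lemma child_inj {k : ℕ} {n v : List (Fin k)} {i j : Fin k}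
    (hi : n ++ [i] <+: v) (hj : n ++ [j] <+: v) : i = j := by
  obtain ⟨s, hs⟩ := hi
  obtain ⟨t, ht⟩ := hj
  rw [← ht, List.append_assoc, List.append_assoc] at hs
  have := List.append_cancel_left hs
  simp only [List.singleton_append, List.cons.injEq] at this
  exact this.1

lemma leaf_filter_eq {N : Finset (List (Fin 2))} (hN : IsFullTree 2 N)
    {n : List (Fin 2)} (hn : n ∈ N) (hleaf : ∀ i : Fin 2, n ++ [i] ∉ N) :
    (leaves 2 N).filter (fun v => n <+: v) = {n} := by
  ext v
  simp only [Finset.mem_filter, Finset.mem_singleton, leaves]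
  constructor
  · rintro ⟨⟨hvN, -⟩, hpre⟩
    by_contra hne
    obtain ⟨i, hi⟩ := child_prefix hpre hne
    exact hleaf i (hN.2.1 v hvN _ hi)
  · rintro rfl
    exact ⟨⟨hn, hleaf⟩, List.prefix_refl _⟩

lemma leaf_internals_empty {N : Finset (List (Fin 2))} (hN : IsFullTree 2 N)
    {n : List (Fin 2)} (hleaf : ∀ i : Fin 2, n ++ [i] ∉ N) :
    (internals 2 N).filter (fun m => n <+: m) = ∅ := by
  ext m
  simp only [Finset.mem_filter, Finset.notMem_empty, iff_false, internals, not_and]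
  rintro ⟨hmN, hint⟩ hpre
  by_cases hne : m = n
  · subst hne; exact hleaf 0 (hint 0)
  · obtain ⟨i, hi⟩ := child_prefix hpre hne
    exact hleaf i (hN.2.1 m hmN _ hi)

lemma leaves_split {N : Finset (List (Fin 2))}
    {n : List (Fin 2)} (hint : ∀ i : Fin 2, n ++ [i] ∈ N) :
    (leaves 2 N).filter (fun v => n <+: v) =
      (leaves 2 N).filter (fun v => n ++ [0] <+: v) ∪
        (leaves 2 N).filter (fun v => n ++ [1] <+: v) := by
  ext v
  simp only [Finset.mem_filter, Finset.mem_union, ← and_or_left, and_congr_right_iff]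
  intro hv
  constructor
  · intro hpre
    have hne : v ≠ n := by
      rintro rfl
      simp only [leaves, Finset.mem_filter] at hv
      exact hv.2 0 (hint 0)
    obtain ⟨i, hi⟩ := child_prefix hpre hne
    fin_cases i
    · exact Or.inl hi
    · exact Or.inr hi
  · rintro (h | h) <;> exact (List.prefix_append n _).trans h

lemma leaves_disj {N : Finset (List (Fin 2))} {n : List (Fin 2)} :
    Disjoint ((leaves 2 N).filter (fun v => n ++ [0] <+: v))
      ((leaves 2 N).filter (fun v => n ++ [1] <+: v)) := by
  rw [Finset.disjoint_left]
  rintro v h0 h1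
  simp only [Finset.mem_filter] at h0 h1
  have := child_inj h0.2 h1.2
  simp at this

lemma internals_split {N : Finset (List (Fin 2))}
    {n : List (Fin 2)} (hn : n ∈ N) (hint : ∀ i : Fin 2, n ++ [i] ∈ N) :
    (internals 2 N).filter (fun m => n <+: m) =
      insert n ((internals 2 N).filter (fun m => n ++ [0] <+: m) ∪
        (internals 2 N).filter (fun m => n ++ [1] <+: m)) := by
  ext m
  simp only [Finset.mem_filter, Finset.mem_insert, Finset.mem_union]
  constructor
  · rintro ⟨hm, hpre⟩
    by_cases hne : m = n
    · exact Or.inl hne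
    · obtain ⟨i, hi⟩ := child_prefix hpre hne
      right
      fin_cases i
      · exact Or.inl ⟨hm, hi⟩
      · exact Or.inr ⟨hm, hi⟩
  · rintro (rfl | ⟨hm, hi⟩ | ⟨hm, hi⟩)
    · exact ⟨by simp [internals, hn, hint], List.prefix_refl _⟩
    · exact ⟨hm, (List.prefix_append n _).trans hi⟩
    · exact ⟨hm, (List.prefix_append n _).trans hi⟩

lemma internals_disj {N : Finset (List (Fin 2))} {n : List (Fin 2)} :
    Disjoint ((internals 2 N).filter (fun m => n ++ [0] <+: m))
      ((internals 2 N).filter (fun m => n ++ [1] <+: m)) := by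
  rw [Finset.disjoint_left]
  rintro v h0 h1
  simp only [Finset.mem_filter] at h0 h1
  have := child_inj h0.2 h1.2
  simp at this

lemma n_notin_union {N : Finset (List (Fin 2))} {n : List (Fin 2)} :
    n ∉ ((internals 2 N).filter (fun m => n ++ [0] <+: m) ∪
        (internals 2 N).filter (fun m => n ++ [1] <+: m)) := by
  simp only [Finset.mem_union, Finset.mem_filter, not_or, not_and]
  constructor <;> intro _ h <;> exact absurd (List.IsPrefix.length_le h) (by simp)

lemma subtree_card_lt {N : Finset (List (Fin 2))}
    {n : List (Fin 2)} (hn : n ∈ N) (i : Fin 2) :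
    (N.filter (fun m => n ++ [i] <+: m)).card < (N.filter (fun m => n <+: m)).card := by
  apply Finset.card_lt_card
  constructor
  · intro m hm
    simp only [Finset.mem_filter] at hm ⊢
    exact ⟨hm.1, (List.prefix_append n _).trans hm.2⟩
  · intro hsub
    have hn' : n ∈ N.filter (fun m => n <+: m) := by
      simp [Finset.mem_filter, hn]
    have := hsub hn'
    simp only [Finset.mem_filter] at this
    exact absurd (List.IsPrefix.length_le this.2) (by simp)

lemma exp_shift {v : List (Fin 2)} {n : List (Fin 2)} (i : Fin 2) :
    (2 : ℝ) ^ ((n.length : ℤ) - (v.length : ℤ)) =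
      (2 : ℝ) ^ (((n ++ [i]).length : ℤ) - (v.length : ℤ)) * 2⁻¹ := by
  have : ((n ++ [i]).length : ℤ) = (n.length : ℤ) + 1 := by simp
  rw [this]
  rw [show (n.length : ℤ) + 1 - v.length = ((n.length : ℤ) - v.length) + 1 by ring]
  rw [zpow_add₀ (two_ne_zero)]
  ring

lemma kraft {N : Finset (List (Fin 2))} (hN : IsFullTree 2 N) :
    ∀ (c : ℕ) (n : List (Fin 2)), n ∈ N → (N.filter (fun m => n <+: m)).card ≤ c →
      ∑ v ∈ (leaves 2 N).filter (fun v => n <+: v),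
        (2 : ℝ) ^ ((n.length : ℤ) - (v.length : ℤ)) = 1 := by
  intro c
  induction c with
  | zero =>
    intro n hn hc
    exfalso
    have : n ∈ N.filter (fun m => n <+: m) := by simp [hn]
    have := Finset.card_pos.mpr ⟨n, this⟩
    omega
  | succ c ih =>
    intro n hn hc
    rcases hN.2.2 n hn with hint | hleaf
    · rw [leaves_split hint, Finset.sum_union leaves_disj]
      have h0 := ih (n ++ [0]) (hint 0)
        (by have := subtree_card_lt hn (0 : Fin 2); omega)
      have h1 := ih (n ++ [1]) (hint 1)
        (by have := subtree_card_lt hn (1 : Fin 2); omega)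
      calc _ = (∑ v ∈ (leaves 2 N).filter (fun v => n ++ [0] <+: v),
              (2 : ℝ) ^ (((n ++ [0]).length : ℤ) - (v.length : ℤ)) * 2⁻¹) +
            (∑ v ∈ (leaves 2 N).filter (fun v => n ++ [1] <+: v),
              (2 : ℝ) ^ (((n ++ [1]).length : ℤ) - (v.length : ℤ)) * 2⁻¹) := by
              congr 1 <;> exact Finset.sum_congr rfl (fun v _ => exp_shift _)
        _ = 1 := by rw [← Finset.sum_mul, ← Finset.sum_mul, h0, h1]; norm_num
    · rw [leaf_filter_eq hN hn hleaf]
      simp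

lemma main_count {N : Finset (List (Fin 2))} (hN : IsFullTree 2 N) :
    ∀ (c : ℕ) (n : List (Fin 2)), n ∈ N → (N.filter (fun m => n <+: m)).card ≤ c →
      ∑ v ∈ (leaves 2 N).filter (fun v => n <+: v),
        ((1 : ℝ) - 2 ^ ((n.length : ℤ) - (v.length : ℤ)))
      = (((internals 2 N).filter (fun m => n <+: m)).card : ℝ) := by
  intro c
  induction c with
  | zero =>
    intro n hn hc
    exfalso
    have : n ∈ N.filter (fun m => n <+: m) := by simp [hn]
    have := Finset.card_pos.mpr ⟨n, this⟩
    omega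
  | succ c ih =>
    intro n hn hc
    rcases hN.2.2 n hn with hint | hleaf
    · rw [leaves_split hint, Finset.sum_union leaves_disj,
        internals_split hn hint, Finset.card_insert_of_notMem n_notin_union,
        Finset.card_union_of_disjoint internals_disj]
      have h0 := ih (n ++ [0]) (hint 0)
        (by have := subtree_card_lt hn (0 : Fin 2); omega)
      have h1 := ih (n ++ [1]) (hint 1)
        (by have := subtree_card_lt hn (1 : Fin 2); omega)
      have k0 := kraft hN c (n ++ [0]) (hint 0)
        (by have := subtree_card_lt hn (0 : Fin 2); omega)
      have k1 := kraft hN c (n ++ [1]) (hint 1)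
        (by have := subtree_card_lt hn (1 : Fin 2); omega)
      have split : ∀ i : Fin 2, ∀ v : List (Fin 2),
          (1 : ℝ) - 2 ^ ((n.length : ℤ) - (v.length : ℤ)) =
            ((1 : ℝ) - 2 ^ (((n ++ [i]).length : ℤ) - (v.length : ℤ)))
              + (2 : ℝ) ^ (((n ++ [i]).length : ℤ) - (v.length : ℤ)) * 2⁻¹ := by
        intro i v
        rw [← exp_shift i]
        have : ((n ++ [i]).length : ℤ) = (n.length : ℤ) + 1 := by simp
        rw [this, show (n.length : ℤ) + 1 - v.length = ((n.length : ℤ) - v.length) + 1 by ring,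
          zpow_add₀ (two_ne_zero : (2:ℝ) ≠ 0)]
        ring
      rw [Finset.sum_congr rfl (fun v _ => split 0 v),
        Finset.sum_congr rfl (fun v _ => split 1 v),
        Finset.sum_add_distrib, Finset.sum_add_distrib, h0, h1,
        ← Finset.sum_mul, ← Finset.sum_mul, k0, k1]
      push_cast
      ring
    · rw [leaf_filter_eq hN hn hleaf, leaf_internals_empty hN hleaf]
      simp

/-- Knuth update with subsolver leaf weights at depth `d` (Equation (1)):
conditional on the random root-to-leaf path passing through a node `n` of depth
`d = |n|` and terminating at leaf `v` (path length `ℓ = |v|`), the expectation of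
`2^{ℓ-d} T(v) + 2^{ℓ-d} - 1` equals the total weighted size of the subtree rooted
at `n`: the number `I_n` of internal nodes extending `n` plus the sum of the leaf
weights of leaves extending `n`. -/
theorem knuth_update_depth (N : Finset (List (Fin 2))) (hN : IsFullTree 2 N)
    (T : List (Fin 2) → ℝ) (hT : ∀ v ∈ leaves 2 N, 0 ≤ T v)
    (n : List (Fin 2)) (hn : n ∈ N) :
    ∑ v ∈ (leaves 2 N).filter (fun v => n <+: v),
        (2 : ℝ) ^ ((n.length : ℤ) - (v.length : ℤ)) *
          ((2 : ℝ) ^ ((v.length : ℤ) - (n.length : ℤ)) * T v +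
            (2 : ℝ) ^ ((v.length : ℤ) - (n.length : ℤ)) - 1)
      = (((internals 2 N).filter (fun m => n <+: m)).card : ℝ) +
          ∑ v ∈ (leaves 2 N).filter (fun v => n <+: v), T v := by
  have key := main_count hN (N.filter (fun m => n <+: m)).card n hn le_rfl
  have hsummand : ∀ v : List (Fin 2),
      (2 : ℝ) ^ ((n.length : ℤ) - (v.length : ℤ)) *
          ((2 : ℝ) ^ ((v.length : ℤ) - (n.length : ℤ)) * T v +
            (2 : ℝ) ^ ((v.length : ℤ) - (n.length : ℤ)) - 1)
        = T v + ((1 : ℝ) - 2 ^ ((n.length : ℤ) - (v.length : ℤ))) := by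
    intro v
    have hmul : (2 : ℝ) ^ ((n.length : ℤ) - (v.length : ℤ)) *
        (2 : ℝ) ^ ((v.length : ℤ) - (n.length : ℤ)) = 1 := by
      rw [← zpow_add₀ (two_ne_zero : (2:ℝ) ≠ 0)]
      rw [show (n.length : ℤ) - v.length + ((v.length : ℤ) - n.length) = 0 by ring]
      simp
    calc (2 : ℝ) ^ ((n.length : ℤ) - (v.length : ℤ)) *
          ((2 : ℝ) ^ ((v.length : ℤ) - (n.length : ℤ)) * T v +
            (2 : ℝ) ^ ((v.length : ℤ) - (n.length : ℤ)) - 1)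
        = ((2 : ℝ) ^ ((n.length : ℤ) - (v.length : ℤ)) *
            (2 : ℝ) ^ ((v.length : ℤ) - (n.length : ℤ))) * T v +
          (2 : ℝ) ^ ((n.length : ℤ) - (v.length : ℤ)) *
            (2 : ℝ) ^ ((v.length : ℤ) - (n.length : ℤ)) -
          (2 : ℝ) ^ ((n.length : ℤ) - (v.length : ℤ)) := by ring
      _ = T v + ((1 : ℝ) - 2 ^ ((n.length : ℤ) - (v.length : ℤ))) := by rw [hmul]; ring
  rw [Finset.sum_congr rfl (fun v _ => hsummand v), Finset.sum_add_distrib, key]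
  ring
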